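/- If α, β ∈ IEnd(P_n) have similar type, then there exist partial automorphisms γ, δ ∈ PAut(P_n) such that β = γαδ and α = γ⁻¹βδ⁻¹. -/

import Mathlib

/-!
On a maximal interval `J` of `Im α`, the preimage `α⁻¹(J)` splits into maximal intervals
(blocks), on each of which `α` is an injective walk along the path, hence affine of slope `±1`;
so the images of the blocks tile `J` by intervals. Similar type supplies a size-preserving
bijection `θ` between the blocks over `J` and those over `σ J` that keeps or reverses the order
of their images. Counting gives `|J| = |σ J|`, and the increasing, resp. decreasing, affine
bijection `J → σ J` carries the image of every block `I` onto the image of `θ I`. Gluing these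
maps gives a partial automorphism `δ` from `Im α` onto `Im β`, and `γ = β δ⁻¹ α⁻¹` (composed left
to right) satisfies both identities. It is a partial automorphism because adjacent points lie
in a common block, and along corresponding blocks `α`, `δ` and `β` are all isometries.
-/

open scoped Classical

/-- `adj u v` means `|u - v| = 1`, i.e. `u` and `v` are adjacent in the path. -/
def adj (u v : ℕ) : Prop := u + 1 = v ∨ v + 1 = u

/-- `f` is an injective partial endomorphism of the path `P_n` on `{1,…,n}`. -/
structure IsIEnd (n : ℕ) (f : ℕ →. ℕ) : Prop where
  dom_subset : f.Dom ⊆ Set.Icc 1 n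
  ran_subset : f.ran ⊆ Set.Icc 1 n
  inj : ∀ ⦃x y a : ℕ⦄, a ∈ f x → a ∈ f y → x = y
  edge : ∀ ⦃u v a b : ℕ⦄, a ∈ f u → b ∈ f v → adj u v → adj a b

/-- `f` is a partial automorphism of the path `P_n`. -/
def IsPAut (n : ℕ) (f : ℕ →. ℕ) : Prop :=
  IsIEnd n f ∧ ∀ ⦃u v a b : ℕ⦄, a ∈ f u → b ∈ f v → adj a b → adj u v

/-- Left-to-right composition of partial maps: `x (pcomp f g) = (x f) g`. -/
def pcomp (f g : ℕ →. ℕ) : ℕ →. ℕ := PFun.comp g f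

/-- The inverse of an injective partial map. -/
noncomputable def pinv (f : ℕ →. ℕ) : ℕ →. ℕ :=
  fun y => ⟨∃ x, y ∈ f x, fun h => h.choose⟩

/-- `I` is an interval of `X`: a set of consecutive integers contained in `X`. -/
def IsIntervalOf (I X : Set ℕ) : Prop :=
  I ⊆ X ∧ ∀ ⦃x⦄, x ∈ I → ∀ ⦃y⦄, y ∈ I → ∀ ⦃z : ℕ⦄, x < z → z < y → z ∈ I

/-- `I` is a maximal interval of `X`. -/
def IsMaxIntervalOf (I X : Set ℕ) : Prop :=
  IsIntervalOf I X ∧ ∀ J, IsIntervalOf J X → I ⊆ J → I = J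

/-- Every element of `A` is smaller than every element of `B`. -/
def SetLT (A B : Set ℕ) : Prop := ∀ a ∈ A, ∀ b ∈ B, a < b

/-- The type of the maximal interval `J` of `Im α` equals the type of the maximal
interval `J'` of `Im β` or its reverse: there is a bijection `θ` between the maximal
intervals of `α⁻¹(J)` and those of `β⁻¹(J')` preserving sizes and either preserving or
reversing the order of the images. -/
def TypeEquiv (α : ℕ →. ℕ) (J : Set ℕ) (β : ℕ →. ℕ) (J' : Set ℕ) : Prop :=
  ∃ θ : Set ℕ → Set ℕ,
    (∀ I, IsMaxIntervalOf I (α.preimage J) → IsMaxIntervalOf (θ I) (β.preimage J')) ∧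
    (∀ I', IsMaxIntervalOf I' (β.preimage J') →
      ∃! I, IsMaxIntervalOf I (α.preimage J) ∧ θ I = I') ∧
    (∀ I, IsMaxIntervalOf I (α.preimage J) → I.ncard = (θ I).ncard) ∧
    ((∀ I₁ I₂, IsMaxIntervalOf I₁ (α.preimage J) → IsMaxIntervalOf I₂ (α.preimage J) →
        SetLT (α.image I₁) (α.image I₂) → SetLT (β.image (θ I₁)) (β.image (θ I₂))) ∨
     (∀ I₁ I₂, IsMaxIntervalOf I₁ (α.preimage J) → IsMaxIntervalOf I₂ (α.preimage J) →
        SetLT (α.image I₁) (α.image I₂) → SetLT (β.image (θ I₂)) (β.image (θ I₁))))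

/-- `α` and `β` have similar type. -/
def SimilarType (α β : ℕ →. ℕ) : Prop :=
  ∃ σ : Set ℕ → Set ℕ,
    (∀ J, IsMaxIntervalOf J α.ran → IsMaxIntervalOf (σ J) β.ran) ∧
    (∀ J', IsMaxIntervalOf J' β.ran → ∃! J, IsMaxIntervalOf J α.ran ∧ σ J = J') ∧
    (∀ J, IsMaxIntervalOf J α.ran → TypeEquiv α J β (σ J))

open Set

theorem bijOn_of_existsUnique {α β : Type*} {f : α → β} {s : Set α} {t : Set β}
    (hf : MapsTo f s t) (h : ∀ y ∈ t, ∃! x, x ∈ s ∧ f x = y) : BijOn f s t := by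
  refine ⟨hf, fun x hx x' hx' hxx' => ?_, fun y hy => ?_⟩
  · exact (h _ (hf hx)).unique ⟨hx, rfl⟩ ⟨hx', hxx'.symm⟩
  · obtain ⟨x, ⟨hx, rfl⟩, -⟩ := h y hy
    exact mem_image_of_mem f hx

namespace IsIntervalOf

variable {I X : Set ℕ}

theorem ordConnected (hI : IsIntervalOf I X) : I.OrdConnected := by
  refine ⟨fun x hx y hy z hz => ?_⟩
  rcases hz.1.eq_or_lt with rfl | hxz
  · exact hx
  rcases hz.2.eq_or_lt with rfl | hzy
  · exact hy
  exact hI.2 hx hy hxz hzy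

theorem of_ordConnected (hIX : I ⊆ X) (hI : I.OrdConnected) : IsIntervalOf I X :=
  ⟨hIX, fun _ hx _ hy _ hxz hzy => hI.out hx hy ⟨hxz.le, hzy.le⟩⟩

theorem mono {Y : Set ℕ} (hI : IsIntervalOf I X) (hXY : X ⊆ Y) : IsIntervalOf I Y :=
  ⟨hI.1.trans hXY, hI.2⟩

theorem exists_eq_Icc (hI : IsIntervalOf I X) (hX : X.Finite) : ∃ a b, I = Icc a b := by
  rcases I.eq_empty_or_nonempty with rfl | hne
  · exact ⟨1, 0, by simp⟩
  have hbdd : BddAbove I := (hX.subset hI.1).bddAbove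
  refine ⟨sInf I, sSup I, Subset.antisymm (fun z hz => ⟨Nat.sInf_le hz, le_csSup hbdd hz⟩) ?_⟩
  exact hI.ordConnected.out (Nat.sInf_mem hne) (Nat.sSup_mem hne hbdd)

end IsIntervalOf

theorem isMaxIntervalOf_ordConnectedComponent {X : Set ℕ} {x : ℕ} (hx : x ∈ X) :
    IsMaxIntervalOf (ordConnectedComponent X x) X := by
  refine ⟨.of_ordConnected ordConnectedComponent_subset inferInstance, fun K hK hsub => ?_⟩
  have := hK.ordConnected
  exact hsub.antisymm
    (subset_ordConnectedComponent (hsub (self_mem_ordConnectedComponent.2 hx)) hK.1)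

namespace IsMaxIntervalOf

variable {I K X : Set ℕ} {x : ℕ}

theorem eq_ordConnectedComponent (hI : IsMaxIntervalOf I X) (hx : x ∈ I) :
    I = ordConnectedComponent X x := by
  have := hI.1.ordConnected
  exact hI.2 _ (isMaxIntervalOf_ordConnectedComponent (hI.1.1 hx)).1
    (subset_ordConnectedComponent hx hI.1.1)

theorem eq_of_mem (hI : IsMaxIntervalOf I X) (hK : IsMaxIntervalOf K X) (hxI : x ∈ I)
    (hxK : x ∈ K) : I = K :=
  (hI.eq_ordConnectedComponent hxI).trans (hK.eq_ordConnectedComponent hxK).symm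

theorem disjoint (hI : IsMaxIntervalOf I X) (hK : IsMaxIntervalOf K X) (hIK : I ≠ K) :
    Disjoint I K :=
  disjoint_left.2 fun _ hxI hxK => hIK (hI.eq_of_mem hK hxI hxK)

theorem mem_of_adj (hI : IsMaxIntervalOf I X) (hx : x ∈ I) {y : ℕ} (hy : y ∈ X)
    (hxy : adj x y) : y ∈ I := by
  rw [hI.eq_ordConnectedComponent hx, mem_ordConnectedComponent]
  intro z hz
  rw [mem_uIcc] at hz
  obtain rfl | rfl : z = x ∨ z = y := by unfold adj at hxy; omega
  · exact hI.1.1 hx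
  · exact hy

end IsMaxIntervalOf

theorem exists_isMaxIntervalOf_mem {X : Set ℕ} {x : ℕ} (hx : x ∈ X) :
    ∃ I, IsMaxIntervalOf I X ∧ x ∈ I :=
  ⟨_, isMaxIntervalOf_ordConnectedComponent hx, self_mem_ordConnectedComponent.2 hx⟩

theorem ncard_eq_finsum_isMaxIntervalOf {X : Set ℕ} (hX : X.Finite) :
    X.ncard = ∑ᶠ I ∈ {I | IsMaxIntervalOf I X}, I.ncard := by
  have hcover : X = ⋃ I ∈ {I | IsMaxIntervalOf I X}, I := by
    refine Subset.antisymm (fun x hx => ?_) (iUnion₂_subset fun I hI => hI.1.1)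
    obtain ⟨I, hI, hxI⟩ := exists_isMaxIntervalOf_mem hx
    exact mem_biUnion hI hxI
  conv_lhs => rw [hcover]
  exact Finite.ncard_biUnion (hX.finite_subsets.subset fun I hI => hI.1.1)
    (fun I hI => hX.subset hI.1.1) fun I hI K hK hIK => hI.disjoint hK hIK

theorem ncard_eq_of_bijOn_isMaxIntervalOf {X Y : Set ℕ} (hX : X.Finite) (hY : Y.Finite)
    {θ : Set ℕ → Set ℕ} (hθ : BijOn θ {I | IsMaxIntervalOf I X} {I | IsMaxIntervalOf I Y})
    (hcard : ∀ I, IsMaxIntervalOf I X → I.ncard = (θ I).ncard) : X.ncard = Y.ncard := by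
  rw [ncard_eq_finsum_isMaxIntervalOf hX, ncard_eq_finsum_isMaxIntervalOf hY]
  exact finsum_mem_eq_of_bijOn θ hθ hcard

theorem affine_of_adj_succ {g : ℕ → ℕ} {a b : ℕ}
    (hstep : ∀ x, a ≤ x → x < b → adj (g x) (g (x + 1))) (hinj : InjOn g (Icc a b)) :
    (∀ x ∈ Icc a b, g x = g a + (x - a)) ∨ (∀ x ∈ Icc a b, g x + (x - a) = g a) := by
  -- an injective walk along the path never turns back
  have hturn : ∀ x, a ≤ x → x + 1 < b →
      (g (x + 1) = g x + 1 ↔ g (x + 1 + 1) = g (x + 1) + 1) := by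
    intro x hax hxb
    have h₁ := hstep x hax (by omega)
    have h₂ := hstep (x + 1) (by omega) hxb
    have hne : g (x + 1 + 1) ≠ g x := fun he => by
      have := hinj ⟨by omega, by omega⟩ ⟨hax, by omega⟩ he
      omega
    unfold adj at h₁ h₂
    omega
  have hconst : ∀ x, a ≤ x → x < b → (g (x + 1) = g x + 1 ↔ g (a + 1) = g a + 1) := by
    intro x hax
    induction x, hax using Nat.le_induction with
    | base => exact fun _ => Iff.rfl
    | succ x hax ih => exact fun hxb => (hturn x hax hxb).symm.trans (ih (by omega))
  by_cases hup : g (a + 1) = g a + 1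
  · left
    rintro x ⟨hax, hxb⟩
    induction x, hax using Nat.le_induction with
    | base => simp
    | succ x hax ih =>
      have := (hconst x hax (by omega)).2 hup
      have := ih (by omega)
      omega
  · right
    rintro x ⟨hax, hxb⟩
    induction x, hax using Nat.le_induction with
    | base => simp
    | succ x hax ih =>
      have hdown := mt (hconst x hax (by omega)).1 hup
      have := hstep x hax (by omega)
      have := ih (by omega)
      unfold adj at *
      omega

namespace IsIEnd

variable {n : ℕ} {α : ℕ →. ℕ}

theorem dom_finite (hα : IsIEnd n α) : α.Dom.Finite := (finite_Icc 1 n).subset hα.dom_subset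

theorem ran_finite (hα : IsIEnd n α) : α.ran.Finite := (finite_Icc 1 n).subset hα.ran_subset

theorem affine_on_Icc (hα : IsIEnd n α) {a b : ℕ} (hab : Icc a b ⊆ α.Dom) :
    ∃ c, (∀ x ∈ Icc a b, ∀ v ∈ α x, v = c + (x - a)) ∨
      (∀ x ∈ Icc a b, ∀ v ∈ α x, v + (x - a) = c) := by
  set g : ℕ → ℕ := fun x => (α x).getOrElse 0
  have hg : ∀ x v, v ∈ α x → g x = v := fun x v hv => by
    simp only [g, Part.getOrElse_of_dom _ (Part.dom_iff_mem.2 ⟨v, hv⟩)]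
    exact Part.get_eq_of_mem hv _
  have hgα : ∀ x ∈ Icc a b, g x ∈ α x := fun x hx => by
    obtain ⟨v, hv⟩ := Part.dom_iff_mem.1 (hab hx)
    exact hg x v hv ▸ hv
  have hstep : ∀ x, a ≤ x → x < b → adj (g x) (g (x + 1)) := fun x hax hxb =>
    hα.edge (hgα x ⟨hax, hxb.le⟩) (hgα (x + 1) ⟨by omega, hxb⟩) (Or.inl rfl)
  have hinj : InjOn g (Icc a b) := fun x hx y hy hxy =>
    hα.inj (hxy ▸ hgα x hx) (hgα y hy)
  refine ⟨g a, (affine_of_adj_succ hstep hinj).imp ?_ ?_⟩ <;>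
    exact fun h x hx v hv => hg x v hv ▸ h x hx

theorem adj_of_adj (hα : IsIEnd n α) {I : Set ℕ} (hI : IsIntervalOf I α.Dom) {x y v w : ℕ}
    (hx : x ∈ I) (hy : y ∈ I) (hv : v ∈ α x) (hw : w ∈ α y) (hvw : adj v w) : adj x y := by
  obtain ⟨a, b, rfl⟩ := hI.exists_eq_Icc hα.dom_finite
  obtain ⟨c, h | h⟩ := hα.affine_on_Icc hI.1 <;>
  · have := h x hx v hv
    have := h y hy w hw
    simp only [mem_Icc] at hx hy
    unfold adj at *
    omega

theorem exists_image_eq_Icc (hα : IsIEnd n α) {I : Set ℕ} (hI : IsIntervalOf I α.Dom) :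
    ∃ p q, α.image I = Icc p q := by
  obtain ⟨a, b, rfl⟩ := hI.exists_eq_Icc hα.dom_finite
  have hdom := hI.1
  rcases lt_or_ge b a with hba | hab'
  · exact ⟨1, 0, by ext; simp [PFun.mem_image, Icc_eq_empty_of_lt hba]⟩
  have hval : ∀ x ∈ Icc a b, ∃ v, v ∈ α x := fun x hx => Part.dom_iff_mem.1 (hdom hx)
  obtain ⟨c, h | h⟩ := hα.affine_on_Icc hdom
  · refine ⟨c, c + (b - a), Subset.antisymm ?_ fun v hv => ?_⟩
    · rintro v ⟨x, hx, hv⟩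
      have := h x hx v hv
      simp only [mem_Icc] at hx ⊢
      omega
    · simp only [mem_Icc] at hv
      have hx : a + (v - c) ∈ Icc a b := ⟨by omega, by omega⟩
      obtain ⟨w, hw⟩ := hval _ hx
      have := h _ hx w hw
      obtain rfl : w = v := by omega
      exact ⟨_, hx, hw⟩
  · obtain ⟨w, hw⟩ := hval b ⟨hab', le_rfl⟩
    have hcb := h b ⟨hab', le_rfl⟩ w hw
    refine ⟨c - (b - a), c, Subset.antisymm ?_ fun v hv => ?_⟩
    · rintro v ⟨x, hx, hv⟩
      have := h x hx v hv
      simp only [mem_Icc] at hx ⊢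
      omega
    · simp only [mem_Icc] at hv
      have hx : a + (c - v) ∈ Icc a b := ⟨by omega, by omega⟩
      obtain ⟨w, hw⟩ := hval _ hx
      have := h _ hx w hw
      obtain rfl : w = v := by omega
      exact ⟨_, hx, hw⟩

end IsIEnd

def PInjective (f : ℕ →. ℕ) : Prop := ∀ ⦃x y a : ℕ⦄, a ∈ f x → a ∈ f y → x = y

theorem mem_pcomp {f g : ℕ →. ℕ} {x c : ℕ} : c ∈ pcomp f g x ↔ ∃ b ∈ f x, c ∈ g b := by
  simp only [pcomp, PFun.comp_apply]
  exact Part.mem_bind_iff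

theorem mem_pinv {f : ℕ →. ℕ} (hf : PInjective f) {x y : ℕ} : x ∈ pinv f y ↔ y ∈ f x :=
  ⟨fun ⟨h, hx⟩ => hx ▸ h.choose_spec,
    fun hy => ⟨⟨x, hy⟩, hf (Exists.choose_spec (⟨x, hy⟩ : ∃ x, y ∈ f x)) hy⟩⟩

theorem pinv_image_eq {f : ℕ →. ℕ} (hf : PInjective f) {A : Set ℕ} (hA : A ⊆ f.Dom) :
    (pinv f).image (f.image A) = A := by
  ext x
  simp only [PFun.mem_image, mem_pinv hf]
  constructor
  · rintro ⟨v, ⟨y, hy, hvy⟩, hvx⟩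
    exact hf hvy hvx ▸ hy
  · intro hx
    obtain ⟨v, hv⟩ := (PFun.mem_dom _ _).1 (hA hx)
    exact ⟨v, ⟨x, hx, hv⟩, hv⟩

theorem image_subset_of_subset_preimage {f : ℕ →. ℕ} {I J : Set ℕ} (h : I ⊆ f.preimage J) :
    f.image I ⊆ J := by
  rintro v ⟨x, hx, hv⟩
  obtain ⟨w, hw, hwx⟩ := h hx
  rwa [Part.mem_unique hv hwx]

theorem ncard_eq_of_pInjective {f : ℕ →. ℕ} (hf : PInjective f) {s t : Set ℕ}
    (hst : ∀ x ∈ s, ∃ v ∈ t, v ∈ f x) (hts : ∀ v ∈ t, ∃ x ∈ s, v ∈ f x) :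
    s.ncard = t.ncard := by
  choose! g hgt hgf using hst
  refine ncard_congr (fun x _ => g x) hgt (fun x y hx hy hxy => hf (hgf x hx) (hxy ▸ hgf y hy))
    fun v hv => ?_
  obtain ⟨x, hx, hvx⟩ := hts v hv
  exact ⟨x, hx, Part.mem_unique (hgf x hx) hvx⟩

theorem ncard_image_of_pInjective {f : ℕ →. ℕ} (hf : PInjective f) {s : Set ℕ}
    (hs : s ⊆ f.Dom) : (f.image s).ncard = s.ncard := by
  refine (ncard_eq_of_pInjective hf (fun x hx => ?_)
    fun v hv => (PFun.mem_image _ _ _).1 hv).symm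
  obtain ⟨v, hv⟩ := (PFun.mem_dom _ _).1 (hs hx)
  exact ⟨v, ⟨x, hx, hv⟩, hv⟩

theorem ncard_preimage_of_pInjective {f : ℕ →. ℕ} (hf : PInjective f) {t : Set ℕ}
    (ht : t ⊆ f.ran) : (f.preimage t).ncard = t.ncard := by
  refine ncard_eq_of_pInjective hf (fun _ hx => hx) fun v hv => ?_
  obtain ⟨x, hx⟩ := ht hv
  exact ⟨x, ⟨v, hv, hx⟩, hx⟩

theorem PInjective.disjoint_image {f : ℕ →. ℕ} (hf : PInjective f) {I K : Set ℕ}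
    (h : Disjoint I K) : Disjoint (f.image I) (f.image K) := by
  refine disjoint_left.2 fun v hvI hvK => ?_
  obtain ⟨x, hx, hvx⟩ := (PFun.mem_image _ _ _).1 hvI
  obtain ⟨y, hy, hvy⟩ := (PFun.mem_image _ _ _).1 hvK
  exact disjoint_left.1 h hx (hf hvx hvy ▸ hy)

theorem IsPAut.pinv {n : ℕ} {f : ℕ →. ℕ} (hf : IsPAut n f) : IsPAut n (pinv f) := by
  have hinv : ∀ {x y}, x ∈ _root_.pinv f y ↔ y ∈ f x := mem_pinv hf.1.inj
  refine ⟨⟨fun y hy => ?_, fun x ⟨y, hxy⟩ => ?_, fun y y' x hy hy' => ?_,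
    fun u v a b ha hb huv => ?_⟩, fun u v a b ha hb hab => ?_⟩
  · obtain ⟨x, hx⟩ := (PFun.mem_dom _ _).1 hy
    exact hf.1.ran_subset ⟨x, hinv.1 hx⟩
  · exact hf.1.dom_subset ((PFun.mem_dom _ _).2 ⟨y, hinv.1 hxy⟩)
  · exact Part.mem_unique (hinv.1 hy) (hinv.1 hy')
  · exact hf.2 (hinv.1 ha) (hinv.1 hb) huv
  · exact hf.1.edge (hinv.1 ha) (hinv.1 hb) hab

def IsBlock (α : ℕ →. ℕ) (I : Set ℕ) : Prop :=
  ∃ J, IsMaxIntervalOf J α.ran ∧ IsMaxIntervalOf I (α.preimage J)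

def MapsBlocks (α β δ : ℕ →. ℕ) : Prop :=
  ∀ I, IsBlock α I → ∃ I', IsBlock β I' ∧ δ.image (α.image I) = β.image I'

theorem exists_isBlock_mem {α : ℕ →. ℕ} {x : ℕ} (hx : x ∈ α.Dom) :
    ∃ I, IsBlock α I ∧ x ∈ I := by
  obtain ⟨v, hv⟩ := (PFun.mem_dom _ _).1 hx
  obtain ⟨J, hJ, hvJ⟩ := exists_isMaxIntervalOf_mem (show v ∈ α.ran from ⟨x, hv⟩)
  obtain ⟨I, hI, hxI⟩ := exists_isMaxIntervalOf_mem (show x ∈ α.preimage J from ⟨v, hvJ, hv⟩)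
  exact ⟨I, ⟨J, hJ, hI⟩, hxI⟩

theorem IsIEnd.mem_block_of_adj {n : ℕ} {α : ℕ →. ℕ} (hα : IsIEnd n α) {I : Set ℕ}
    (hI : IsBlock α I) {x y : ℕ} (hx : x ∈ I) (hy : y ∈ α.Dom) (hxy : adj x y) : y ∈ I := by
  obtain ⟨J, hJ, hI⟩ := hI
  obtain ⟨v, hvJ, hv⟩ := hI.1.1 hx
  obtain ⟨w, hw⟩ := (PFun.mem_dom _ _).1 hy
  have hwJ : w ∈ J := hJ.mem_of_adj hvJ ⟨y, hw⟩ (hα.edge hv hw hxy)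
  exact hI.mem_of_adj hx ⟨w, hwJ, hw⟩ hxy

theorem adj_of_mapsBlocks {n : ℕ} {α β δ : ℕ →. ℕ} (hα : IsIEnd n α) (hβ : IsIEnd n β)
    (hδ : IsIEnd n δ) (hαβ : MapsBlocks α β δ) {z₁ z₂ v₁ v₂ w₁ w₂ x₁ x₂ : ℕ}
    (hv₁ : v₁ ∈ α z₁) (hv₂ : v₂ ∈ α z₂) (hw₁ : w₁ ∈ δ v₁) (hw₂ : w₂ ∈ δ v₂)
    (hx₁ : w₁ ∈ β x₁) (hx₂ : w₂ ∈ β x₂) (hz : adj z₁ z₂) : adj x₁ x₂ := by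
  obtain ⟨I, hI, hz₁⟩ := exists_isBlock_mem ((PFun.mem_dom _ _).2 ⟨v₁, hv₁⟩)
  have hz₂ := hα.mem_block_of_adj hI hz₁ ((PFun.mem_dom _ _).2 ⟨v₂, hv₂⟩) hz
  obtain ⟨I', hI', himage⟩ := hαβ I hI
  have hmem : ∀ {z v w x}, z ∈ I → v ∈ α z → w ∈ δ v → w ∈ β x → x ∈ I' := by
    intro z v w x hz hv hw hx
    obtain ⟨x', hx', hwx'⟩ := (PFun.mem_image _ _ _).1
      (himage ▸ (PFun.mem_image _ _ _).2 ⟨v, (PFun.mem_image _ _ _).2 ⟨z, hz, hv⟩, hw⟩)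
    exact hβ.inj hwx' hx ▸ hx'
  obtain ⟨J', -, hI'⟩ := hI'
  exact hβ.adj_of_adj (hI'.1.mono (β.preimage_subset_dom J')) (hmem hz₁ hv₁ hw₁ hx₁)
    (hmem hz₂ hv₂ hw₂ hx₂) hx₁ hx₂ (hδ.edge hw₁ hw₂ (hα.edge hv₁ hv₂ hz))

theorem mem_conj {α β δ : ℕ →. ℕ} (hα : PInjective α) (hδ : PInjective δ) {x z : ℕ} :
    z ∈ pcomp (pcomp β (pinv δ)) (pinv α) x ↔ ∃ w v, w ∈ β x ∧ w ∈ δ v ∧ v ∈ α z := by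
  simp only [mem_pcomp, mem_pinv hδ, mem_pinv hα]
  constructor
  · rintro ⟨v, ⟨w, hw, hv⟩, hz⟩
    exact ⟨w, v, hw, hv, hz⟩
  · rintro ⟨w, v, hw, hv, hz⟩
    exact ⟨v, ⟨w, hw, hv⟩, hz⟩

theorem isPAut_conj {n : ℕ} {α β δ : ℕ →. ℕ} (hα : IsIEnd n α) (hβ : IsIEnd n β)
    (hδ : IsPAut n δ) (hαβ : MapsBlocks α β δ) (hβα : MapsBlocks β α (pinv δ)) :
    IsPAut n (pcomp (pcomp β (pinv δ)) (pinv α)) := by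
  have hγ : ∀ {x z}, z ∈ pcomp (pcomp β (pinv δ)) (pinv α) x ↔
      ∃ w v, w ∈ β x ∧ w ∈ δ v ∧ v ∈ α z := mem_conj hα.inj hδ.1.inj
  refine ⟨⟨fun x hx => ?_, fun z ⟨x, hz⟩ => ?_, fun x y z hx hy => ?_,
    fun x₁ x₂ z₁ z₂ h₁ h₂ hx => ?_⟩, fun x₁ x₂ z₁ z₂ h₁ h₂ hz => ?_⟩
  · obtain ⟨z, hz⟩ := (PFun.mem_dom _ _).1 hx
    obtain ⟨w, -, hw, -⟩ := hγ.1 hz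
    exact hβ.dom_subset ((PFun.mem_dom _ _).2 ⟨w, hw⟩)
  · obtain ⟨-, v, -, -, hv⟩ := hγ.1 hz
    exact hα.dom_subset ((PFun.mem_dom _ _).2 ⟨v, hv⟩)
  · obtain ⟨w, v, hw, hv, hz⟩ := hγ.1 hx
    obtain ⟨w', v', hw', hv', hz'⟩ := hγ.1 hy
    obtain rfl := Part.mem_unique hz hz'
    obtain rfl := Part.mem_unique hv hv'
    exact hβ.inj hw hw'
  · obtain ⟨w₁, v₁, hw₁, hv₁, hz₁⟩ := hγ.1 h₁
    obtain ⟨w₂, v₂, hw₂, hv₂, hz₂⟩ := hγ.1 h₂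
    exact adj_of_mapsBlocks hβ hα hδ.pinv.1 hβα hw₁ hw₂ ((mem_pinv hδ.1.inj).2 hv₁)
      ((mem_pinv hδ.1.inj).2 hv₂) hz₁ hz₂ hx
  · obtain ⟨w₁, v₁, hw₁, hv₁, hz₁⟩ := hγ.1 h₁
    obtain ⟨w₂, v₂, hw₂, hv₂, hz₂⟩ := hγ.1 h₂
    exact adj_of_mapsBlocks hα hβ hδ.1 hαβ hz₁ hz₂ hv₁ hv₂ hw₁ hw₂ hz

theorem exists_conj_of_mapsBlocks {n : ℕ} {α β δ : ℕ →. ℕ} (hα : IsIEnd n α)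
    (hβ : IsIEnd n β) (hδ : IsPAut n δ) (hdom : δ.Dom = α.ran) (hran : δ.ran = β.ran)
    (hαβ : MapsBlocks α β δ) (hβα : MapsBlocks β α (pinv δ)) :
    ∃ γ, IsPAut n γ ∧ β = pcomp (pcomp γ α) δ ∧ α = pcomp (pcomp (pinv γ) β) (pinv δ) := by
  set γ := pcomp (pcomp β (pinv δ)) (pinv α)
  have hγaut : IsPAut n γ := isPAut_conj hα hβ hδ hαβ hβα
  have hγ : ∀ {x z}, z ∈ γ x ↔ ∃ w v, w ∈ β x ∧ w ∈ δ v ∧ v ∈ α z := mem_conj hα.inj hδ.1.inj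
  refine ⟨γ, hγaut, PFun.ext fun x w => ?_, PFun.ext fun z v => ?_⟩
  · simp only [mem_pcomp]
    constructor
    · intro hw
      obtain ⟨v, hv⟩ : w ∈ δ.ran := hran ▸ ⟨x, hw⟩
      obtain ⟨z, hz⟩ : v ∈ α.ran := hdom ▸ (PFun.mem_dom _ _).2 ⟨w, hv⟩
      exact ⟨v, ⟨z, hγ.2 ⟨w, v, hw, hv, hz⟩, hz⟩, hv⟩
    · rintro ⟨v, ⟨z, hxz, hz⟩, hv⟩
      obtain ⟨w', v', hw', hv', hz'⟩ := hγ.1 hxz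
      obtain rfl := Part.mem_unique hz hz'
      exact Part.mem_unique hv hv' ▸ hw'
  · simp only [mem_pcomp, mem_pinv hγaut.1.inj, mem_pinv hδ.1.inj]
    constructor
    · intro hv
      obtain ⟨w, hw⟩ := (PFun.mem_dom _ _).1 (hdom ▸ (show v ∈ α.ran from ⟨z, hv⟩))
      obtain ⟨x, hx⟩ : w ∈ β.ran := hran ▸ ⟨v, hw⟩
      exact ⟨w, ⟨x, hγ.2 ⟨w, v, hx, hw, hv⟩, hx⟩, hw⟩
    · rintro ⟨w, ⟨x, hxz, hx⟩, hw⟩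
      obtain ⟨w', v', hw', hv', hz'⟩ := hγ.1 hxz
      obtain rfl := Part.mem_unique hx hw'
      exact hδ.1.inj hw hv' ▸ hz'

theorem image_eq_of_strictMonoOn {β ι : Type*} [LinearOrder β] {f : ℕ → β} {s : Set ℕ}
    {S : Set ι} {A : ι → Set ℕ} {B : ι → Set β} (hs : s.Finite) (hf : StrictMonoOn f s)
    (hA : ∀ i ∈ S, A i ⊆ s) (hsA : s ⊆ ⋃ i ∈ S, A i)
    (hB : ∀ i ∈ S, B i ⊆ f '' s) (hfB : f '' s ⊆ ⋃ i ∈ S, B i)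
    (hAd : S.PairwiseDisjoint A) (hBd : S.PairwiseDisjoint B)
    (hAcmp : ∀ i ∈ S, ∀ j ∈ S, i ≠ j → SetLT (A i) (A j) ∨ SetLT (A j) (A i))
    (hAB : ∀ i ∈ S, ∀ j ∈ S, SetLT (A i) (A j) → ∀ x ∈ B i, ∀ y ∈ B j, x < y)
    (hcard : ∀ i ∈ S, (A i).ncard = (B i).ncard) :
    ∀ i ∈ S, f '' A i = B i := by
  have heq : ∀ i ∈ S, f '' A i ⊆ B i → f '' A i = B i := fun i hi h =>
    eq_of_subset_of_ncard_le h
      (by rw [(hf.injOn.mono (hA i hi)).ncard_image, hcard i hi])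
      ((hs.image f).subset (hB i hi))
  suffices key : ∀ x, ∀ i ∈ S, x ∈ A i → f x ∈ B i from
    fun i hi => heq i hi (image_subset_iff.2 fun x hx => key x i hi hx)
  -- If `f x` fell into another block `B j`, then either `A j` lies below `x`, so by induction
  -- `f '' A j = B j` already contains `f x`; or `A i` lies below `A j`, and then all of `B i`
  -- would be covered by the images of the points of `A i` below `x`, which are too few.
  intro x
  induction x using Nat.strong_induction_on with
  | _ x ih =>
  intro i hi hxi
  have hxs := hA i hi hxi
  obtain ⟨j, hj, hxj⟩ := mem_iUnion₂.1 (hfB (mem_image_of_mem f hxs))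
  by_contra hxi'
  have hij : i ≠ j := by
    rintro rfl
    exact hxi' hxj
  rcases hAcmp i hi j hj hij with hlt | hlt
  · have hsub : B i ⊆ f '' (A i \ {x}) := by
      intro b hb
      obtain ⟨y, hys, rfl⟩ := hB i hi hb
      have hyx : y < x := (hf.lt_iff_lt hys hxs).1 (hAB i hi j hj hlt _ hb _ hxj)
      obtain ⟨k, hk, hyk⟩ := mem_iUnion₂.1 (hsA hys)
      obtain rfl : k = i := by
        by_contra hki
        exact disjoint_left.1 (hBd hk hi hki) (ih y hyx k hk hyk) hb
      exact ⟨y, ⟨hyk, hyx.ne⟩, rfl⟩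
    have hAfin := hs.subset (hA i hi)
    have := (ncard_le_ncard hsub (hAfin.sdiff.image f)).trans (ncard_image_le hAfin.sdiff)
    have := ncard_sdiff_singleton_lt_of_mem hxi hAfin
    have := hcard i hi
    omega
  · have hAj : f '' A j = B j :=
      heq j hj (image_subset_iff.2 fun y hy => ih y (hlt y hy x hxi) j hj hy)
    obtain ⟨y, hy, hyx⟩ := hAj ▸ hxj
    obtain rfl := hf.injOn (hA j hj hy) hxs hyx
    exact disjoint_left.1 (hAd hi hj hij) hxi hy

theorem setLT_or_setLT_of_disjoint_Icc {a b c d : ℕ} (h : Disjoint (Icc a b) (Icc c d)) :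
    SetLT (Icc a b) (Icc c d) ∨ SetLT (Icc c d) (Icc a b) := by
  by_cases hlt : b < c ∨ b < a ∨ d < c
  · left
    intro x hx y hy
    simp only [mem_Icc] at hx hy
    omega
  by_cases hgt : d < a
  · right
    intro x hx y hy
    simp only [mem_Icc] at hx hy
    omega
  exact absurd h (not_disjoint_iff.2 ⟨max a c, by simp only [mem_Icc]; omega,
    by simp only [mem_Icc]; omega⟩)

theorem IsIEnd.setLT_or_setLT_image {n : ℕ} {α : ℕ →. ℕ} (hα : IsIEnd n α) {I K : Set ℕ}
    (hI : IsIntervalOf I α.Dom) (hK : IsIntervalOf K α.Dom) (hIK : Disjoint I K) :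
    SetLT (α.image I) (α.image K) ∨ SetLT (α.image K) (α.image I) := by
  have hdisj := PInjective.disjoint_image hα.inj hIK
  obtain ⟨a, b, hab⟩ := hα.exists_image_eq_Icc hI
  obtain ⟨c, d, hcd⟩ := hα.exists_image_eq_Icc hK
  rw [hab, hcd] at hdisj ⊢
  exact setLT_or_setLT_of_disjoint_Icc hdisj

theorem exists_mem_image_isMaxIntervalOf {α : ℕ →. ℕ} {J : Set ℕ} (hJ : J ⊆ α.ran) {v : ℕ}
    (hv : v ∈ J) : ∃ I, IsMaxIntervalOf I (α.preimage J) ∧ v ∈ α.image I := by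
  obtain ⟨x, hx⟩ := hJ hv
  obtain ⟨I, hI, hxI⟩ := exists_isMaxIntervalOf_mem (show x ∈ α.preimage J from ⟨v, hv, hx⟩)
  exact ⟨I, hI, (PFun.mem_image _ _ _).2 ⟨x, hxI, hx⟩⟩

theorem image_image_eq_of_bijOn_blocks {n : ℕ} {α β : ℕ →. ℕ} {J J' : Set ℕ} (hα : IsIEnd n α)
    (hβ : IsIEnd n β) (hJ : J ⊆ α.ran) (hJ' : J' ⊆ β.ran) {θ : Set ℕ → Set ℕ}
    (hθ : BijOn θ {I | IsMaxIntervalOf I (α.preimage J)} {I | IsMaxIntervalOf I (β.preimage J')})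
    (hcard : ∀ I, IsMaxIntervalOf I (α.preimage J) → I.ncard = (θ I).ncard)
    {f : ℕ → ℕ} (hf : BijOn f J J')
    (horder : (StrictMonoOn f J ∧ ∀ I₁ I₂, IsMaxIntervalOf I₁ (α.preimage J) →
        IsMaxIntervalOf I₂ (α.preimage J) → SetLT (α.image I₁) (α.image I₂) →
          SetLT (β.image (θ I₁)) (β.image (θ I₂))) ∨
      (StrictAntiOn f J ∧ ∀ I₁ I₂, IsMaxIntervalOf I₁ (α.preimage J) →
        IsMaxIntervalOf I₂ (α.preimage J) → SetLT (α.image I₁) (α.image I₂) →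
          SetLT (β.image (θ I₂)) (β.image (θ I₁)))) :
    ∀ I, IsMaxIntervalOf I (α.preimage J) → f '' α.image I = β.image (θ I) := by
  set S := {I | IsMaxIntervalOf I (α.preimage J)}
  have hdom : ∀ I ∈ S, IsIntervalOf I α.Dom := fun I hI => hI.1.mono (α.preimage_subset_dom J)
  have hdom' : ∀ I ∈ S, IsIntervalOf (θ I) β.Dom := fun I hI =>
    (hθ.mapsTo hI).1.mono (β.preimage_subset_dom J')
  have hA : ∀ I ∈ S, α.image I ⊆ J := fun I hI => image_subset_of_subset_preimage hI.1.1
  have hsA : J ⊆ ⋃ I ∈ S, α.image I := fun v hv => by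
    obtain ⟨I, hI, hvI⟩ := exists_mem_image_isMaxIntervalOf hJ hv
    exact mem_biUnion hI hvI
  have hB : ∀ I ∈ S, β.image (θ I) ⊆ f '' J := fun I hI =>
    hf.image_eq ▸ image_subset_of_subset_preimage (hθ.mapsTo hI).1.1
  have hfB : f '' J ⊆ ⋃ I ∈ S, β.image (θ I) := by
    rw [hf.image_eq]
    intro w hw
    obtain ⟨I', hI', hwI'⟩ := exists_mem_image_isMaxIntervalOf hJ' hw
    obtain ⟨I, hI, rfl⟩ := hθ.surjOn hI'
    exact mem_biUnion hI hwI'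
  have hAd : S.PairwiseDisjoint α.image := fun I hI K hK hIK =>
    PInjective.disjoint_image hα.inj (hI.disjoint hK hIK)
  have hBd : S.PairwiseDisjoint (fun I => β.image (θ I)) := fun I hI K hK hIK =>
    PInjective.disjoint_image hβ.inj
      ((hθ.mapsTo hI).disjoint (hθ.mapsTo hK) (hθ.injOn.ne hI hK hIK))
  have hAcmp : ∀ I ∈ S, ∀ K ∈ S, I ≠ K →
      SetLT (α.image I) (α.image K) ∨ SetLT (α.image K) (α.image I) := fun I hI K hK hIK =>
    hα.setLT_or_setLT_image (hdom I hI) (hdom K hK) (hI.disjoint hK hIK)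
  have hcardAB : ∀ I ∈ S, (α.image I).ncard = (β.image (θ I)).ncard := fun I hI => by
    rw [ncard_image_of_pInjective hα.inj (hdom I hI).1,
      ncard_image_of_pInjective hβ.inj (hdom' I hI).1, hcard I hI]
  have hJfin := hα.ran_finite.subset hJ
  rcases horder with ⟨hmono, hord⟩ | ⟨hanti, hord⟩
  · exact image_eq_of_strictMonoOn hJfin hmono hA hsA hB hfB hAd hBd hAcmp
      (fun I hI K hK hIK => hord I K hI hK hIK) hcardAB
  · -- reversing the order of the target turns the antitone case into the monotone one
    exact image_eq_of_strictMonoOn (β := ℕᵒᵈ) hJfin hanti.dual_right hA hsA hB hfB hAd hBd hAcmp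
      (fun I hI K hK hIK x hx y hy => hord I K hI hK hIK y hy x hx) hcardAB

theorem exists_isometry_of_typeEquiv {n : ℕ} {α β : ℕ →. ℕ} {J J' : Set ℕ} (hα : IsIEnd n α)
    (hβ : IsIEnd n β) (hJ : IsMaxIntervalOf J α.ran) (hJ' : IsMaxIntervalOf J' β.ran)
    (h : TypeEquiv α J β J') :
    ∃ (f : ℕ → ℕ) (θ : Set ℕ → Set ℕ), BijOn f J J' ∧
      (∀ u ∈ J, ∀ v ∈ J, adj (f u) (f v) ↔ adj u v) ∧
      BijOn θ {I | IsMaxIntervalOf I (α.preimage J)} {I | IsMaxIntervalOf I (β.preimage J')} ∧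
      ∀ I, IsMaxIntervalOf I (α.preimage J) → f '' α.image I = β.image (θ I) := by
  obtain ⟨θ, hθmaps, hθunique, hcard, horder⟩ := h
  have hθ : BijOn θ {I | IsMaxIntervalOf I (α.preimage J)}
      {I | IsMaxIntervalOf I (β.preimage J')} :=
    bijOn_of_existsUnique (fun I hI => hθmaps I hI) hθunique
  have hJJ' : J.ncard = J'.ncard := by
    rw [← ncard_preimage_of_pInjective hα.inj hJ.1.1,
      ← ncard_preimage_of_pInjective hβ.inj hJ'.1.1]
    exact ncard_eq_of_bijOn_isMaxIntervalOf (hα.dom_finite.subset (α.preimage_subset_dom J))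
      (hβ.dom_finite.subset (β.preimage_subset_dom J')) hθ hcard
  obtain ⟨a, b, rfl⟩ := hJ.1.exists_eq_Icc hα.ran_finite
  obtain ⟨a', b', rfl⟩ := hJ'.1.exists_eq_Icc hβ.ran_finite
  rw [ncard_Icc_nat, ncard_Icc_nat] at hJJ'
  rcases horder with hord | hord
  · have hf : BijOn (fun y => a' + (y - a)) (Icc a b) (Icc a' b') := by
      refine ⟨fun y hy => ?_, fun y hy z hz hyz => ?_, fun y hy => ⟨a + (y - a'), ?_, ?_⟩⟩ <;>
        simp only [mem_Icc] at * <;> omega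
    refine ⟨_, θ, hf, fun u hu v hv => ?_, hθ, image_image_eq_of_bijOn_blocks hα hβ hJ.1.1
      hJ'.1.1 hθ hcard hf (.inl ⟨fun u hu v hv huv => ?_, hord⟩)⟩
    all_goals simp only [mem_Icc, adj] at hu hv ⊢; omega
  · have hf : BijOn (fun y => b' - (y - a)) (Icc a b) (Icc a' b') := by
      refine ⟨fun y hy => ?_, fun y hy z hz hyz => ?_, fun y hy => ⟨a + (b' - y), ?_, ?_⟩⟩ <;>
        simp only [mem_Icc] at * <;> omega
    refine ⟨_, θ, hf, fun u hu v hv => ?_, hθ, image_image_eq_of_bijOn_blocks hα hβ hJ.1.1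
      hJ'.1.1 hθ hcard hf (.inr ⟨fun u hu v hv huv => ?_, hord⟩)⟩
    all_goals simp only [mem_Icc, adj] at hu hv ⊢; omega

theorem exists_bijOn_glue {X Y : Set ℕ} {σ : Set ℕ → Set ℕ}
    (hσ : BijOn σ {J | IsMaxIntervalOf J X} {J | IsMaxIntervalOf J Y})
    {F : Set ℕ → ℕ → ℕ} (hF : ∀ J, IsMaxIntervalOf J X → BijOn (F J) J (σ J))
    (hFadj : ∀ J, IsMaxIntervalOf J X → ∀ u ∈ J, ∀ v ∈ J, adj (F J u) (F J v) ↔ adj u v) :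
    ∃ g : ℕ → ℕ, BijOn g X Y ∧ (∀ u ∈ X, ∀ v ∈ X, adj (g u) (g v) ↔ adj u v) ∧
      ∀ J, IsMaxIntervalOf J X → ∀ v ∈ J, g v = F J v := by
  set C := ordConnectedComponent X
  have hC : ∀ {v}, v ∈ X → IsMaxIntervalOf (C v) X := isMaxIntervalOf_ordConnectedComponent
  have hvC : ∀ {v}, v ∈ X → v ∈ C v := self_mem_ordConnectedComponent.2
  have hgF : ∀ J, IsMaxIntervalOf J X → ∀ v ∈ J, F (C v) v = F J v := fun J hJ v hv => by
    simp only [C]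
    rw [← hJ.eq_ordConnectedComponent hv]
  have hgσ : ∀ {v}, v ∈ X → F (C v) v ∈ σ (C v) := fun hv => (hF _ (hC hv)).mapsTo (hvC hv)
  have hsame : ∀ {u v}, u ∈ X → v ∈ X → F (C v) v ∈ σ (C u) → v ∈ C u := fun hu hv h => by
    have := (hσ.mapsTo (hC hu)).eq_of_mem (hσ.mapsTo (hC hv)) h (hgσ hv)
    exact hσ.injOn (hC hu) (hC hv) this ▸ hvC hv
  refine ⟨fun v => F (C v) v, ⟨fun v hv => (hσ.mapsTo (hC hv)).1.1 (hgσ hv),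
    fun u hu v hv huv => ?_, fun w hw => ?_⟩, fun u hu v hv => ?_, hgF⟩
  · have huv : F (C u) u = F (C v) v := huv
    have hvu := hsame hu hv (huv ▸ hgσ hu)
    refine (hF _ (hC hu)).injOn (hvC hu) hvu ?_
    rwa [← hgF _ (hC hu) v hvu]
  · obtain ⟨J, hJ, hσJ⟩ := hσ.surjOn (isMaxIntervalOf_ordConnectedComponent (X := Y) hw)
    obtain ⟨v, hv, rfl⟩ := (hF J hJ).surjOn (hσJ ▸ self_mem_ordConnectedComponent.2 hw)
    exact ⟨v, hJ.1.1 hv, hgF J hJ v hv⟩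
  · show adj (F (C u) u) (F (C v) v) ↔ adj u v
    constructor
    · intro h
      have hvu := hsame hu hv ((hσ.mapsTo (hC hu)).mem_of_adj (hgσ hu)
        ((hσ.mapsTo (hC hv)).1.1 (hgσ hv)) h)
      rw [hgF _ (hC hu) v hvu] at h
      exact (hFadj _ (hC hu) u (hvC hu) v hvu).1 h
    · intro h
      have hvu := (hC hu).mem_of_adj (hvC hu) hv h
      rw [hgF _ (hC hu) v hvu]
      exact (hFadj _ (hC hu) u (hvC hu) v hvu).2 h

namespace PFun

variable {g : ℕ → ℕ} {X : Set ℕ}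

theorem dom_res : (res g X).Dom = X := by
  ext x
  simp [mem_dom, mem_res]

theorem image_res {A : Set ℕ} (hA : A ⊆ X) : (res g X).image A = g '' A := by
  ext v
  simp only [mem_image, mem_res, Set.mem_image]
  exact ⟨fun ⟨x, hx, _, hxv⟩ => ⟨x, hx, hxv⟩, fun ⟨x, hx, hxv⟩ => ⟨x, hx, hA hx, hxv⟩⟩

theorem ran_res : (res g X).ran = g '' X := by
  rw [← image_res subset_rfl]
  ext v
  simp [ran, mem_image, mem_res]

theorem isPAut_res {n : ℕ} {Y : Set ℕ} (hX : X ⊆ Icc 1 n) (hY : Y ⊆ Icc 1 n)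
    (hg : BijOn g X Y) (hadj : ∀ u ∈ X, ∀ v ∈ X, adj (g u) (g v) ↔ adj u v) :
    IsPAut n (res g X) := by
  simp only [IsPAut, mem_res]
  refine ⟨⟨dom_res.trans_subset hX, ran_res.trans_subset (hg.image_eq ▸ hY), ?_, ?_⟩, ?_⟩
  · rintro x y a ⟨hx, rfl⟩ ⟨hy, hxy⟩
    exact hg.injOn hx hy hxy.symm
  · rintro u v a b ⟨hu, rfl⟩ ⟨hv, rfl⟩
    exact (hadj u hu v hv).2
  · rintro u v a b ⟨hu, rfl⟩ ⟨hv, rfl⟩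
    exact (hadj u hu v hv).1

end PFun

theorem exists_pAut_mapsBlocks {n : ℕ} {α β : ℕ →. ℕ} (hα : IsIEnd n α) (hβ : IsIEnd n β)
    (h : SimilarType α β) :
    ∃ δ, IsPAut n δ ∧ δ.Dom = α.ran ∧ δ.ran = β.ran ∧
      MapsBlocks α β δ ∧ MapsBlocks β α (pinv δ) := by
  obtain ⟨σ, hσmaps, hσunique, htype⟩ := h
  have hσ : BijOn σ {J | IsMaxIntervalOf J α.ran} {J | IsMaxIntervalOf J β.ran} :=
    bijOn_of_existsUnique (fun J hJ => hσmaps J hJ) hσunique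
  choose! F Θ hF hFadj hΘ hFΘ using fun J hJ =>
    exists_isometry_of_typeEquiv hα hβ hJ (hσmaps J hJ) (htype J hJ)
  obtain ⟨g, hg, hgadj, hgF⟩ := exists_bijOn_glue hσ hF hFadj
  have hδ := PFun.isPAut_res hα.ran_subset hβ.ran_subset hg hgadj
  have himage : ∀ J, IsMaxIntervalOf J α.ran → ∀ I, IsMaxIntervalOf I (α.preimage J) →
      (PFun.res g α.ran).image (α.image I) = β.image (Θ J I) := fun J hJ I hI => by
    have hIJ := image_subset_of_subset_preimage hI.1.1
    rw [PFun.image_res (hIJ.trans hJ.1.1), ← hFΘ J hJ I hI]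
    exact image_congr fun v hv => hgF J hJ v (hIJ hv)
  refine ⟨_, hδ, PFun.dom_res, PFun.ran_res.trans hg.image_eq, ?_, ?_⟩
  · rintro I ⟨J, hJ, hI⟩
    exact ⟨Θ J I, ⟨σ J, hσmaps J hJ, (hΘ J hJ).mapsTo hI⟩, himage J hJ I hI⟩
  · rintro I' ⟨J', hJ', hI'⟩
    obtain ⟨J, hJ, rfl⟩ := hσ.surjOn hJ'
    obtain ⟨I, hI, rfl⟩ := (hΘ J hJ).surjOn hI'
    refine ⟨I, ⟨J, hJ, hI⟩, ?_⟩
    rw [← himage J hJ I hI]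
    refine pinv_image_eq hδ.1.inj ?_
    rw [PFun.dom_res]
    exact (image_subset_of_subset_preimage hI.1.1).trans hJ.1.1

theorem stmt12 (n : ℕ) (α β : ℕ →. ℕ) (hα : IsIEnd n α) (hβ : IsIEnd n β)
    (h : SimilarType α β) :
    ∃ γ δ : ℕ →. ℕ, IsPAut n γ ∧ IsPAut n δ ∧
      β = pcomp (pcomp γ α) δ ∧
      α = pcomp (pcomp (pinv γ) β) (pinv δ) := by
  obtain ⟨δ, hδ, hdom, hran, hαβ, hβα⟩ := exists_pAut_mapsBlocks hα hβ h
  obtain ⟨γ, hγ, hβ_eq, hα_eq⟩ := exists_conj_of_mapsBlocks hα hβ hδ hdom hran hαβ hβα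
  exact ⟨γ, δ, hγ, hδ, hβ_eq, hα_eq⟩
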